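/- arXiv:2304.00307 — 9 statements merged into one kernel-verified Lean document; each statement's English description precedes it below -/
import Mathlib

section
/- For real numbers a, b, c, d with (a-d)^2 + 4bc ≥ 0 and Δ := sqrt((a-d)^2+4bc) > 0, the matrix exponential of the 2×2 matrix [[a,b],[c,d]] equals (1/Δ) · e^{(a+d)/2} · [[Δ·cosh(Δ/2)+(a-d)·sinh(Δ/2), 2b·sinh(Δ/2)], [2c·sinh(Δ/2), Δ·cosh(Δ/2)+(d-a)·sinh(Δ/2)]]. -/
/-!
Write `!![a, b; c, d] = ((a + d) / 2) • 1 + N` with `N` trace free. Then `N * N = (Δ / 2) ^ 2 • 1`,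
so in the exponential series of `N` the even powers are scalars `(Δ / 2) ^ (2n) • 1` and the odd
ones are `(Δ / 2) ^ (2n) • N`: the two halves sum to `cosh (Δ / 2) • 1` and
`(sinh (Δ / 2) / (Δ / 2)) • N`. The scalar part commutes with `N` and contributes `exp ((a + d) / 2)`.
-/

open Matrix Real

theorem NormedSpace.exp_eq_cosh_smul_add_sinh_div_smul {A : Type*} [Ring A] [Algebra ℝ A]
    [TopologicalSpace A] [IsTopologicalRing A] [ContinuousSMul ℝ A] [T2Space A] {N : A} {k : ℝ}
    (hk : k ≠ 0) (hN : N * N = k ^ 2 • 1) :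
    NormedSpace.exp N = cosh k • 1 + (sinh k / k) • N := by
  have hpow_even (n : ℕ) : N ^ (2 * n) = k ^ (2 * n) • (1 : A) := by
    rw [pow_mul, sq, hN, smul_pow, one_pow, ← pow_mul]
  rw [NormedSpace.exp_eq_tsum ℝ]
  refine HasSum.tsum_eq (HasSum.even_add_odd ?_ ?_)
  · convert (hasSum_cosh k).smul_const (1 : A) using 2 with n
    rw [hpow_even, smul_smul, div_eq_inv_mul]
  · convert ((hasSum_sinh k).div_const k).smul_const N using 2 with n
    rw [pow_succ, hpow_even, smul_mul_assoc, one_mul, smul_smul]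
    congr 1
    field_simp
    ring

theorem Matrix.exp_smul_one_add {m : Type*} [Fintype m] [DecidableEq m] (t : ℝ) {N : Matrix m m ℝ}
    {k : ℝ} (hk : k ≠ 0) (hN : N * N = k ^ 2 • 1) :
    NormedSpace.exp (t • 1 + N) = Real.exp t • (cosh k • 1 + (sinh k / k) • N) := by
  have hscalar : NormedSpace.exp (t • 1 : Matrix m m ℝ) = Real.exp t • 1 := by
    rw [smul_one_eq_diagonal, exp_diagonal, smul_one_eq_diagonal]
    congr 1
    ext
    simp [Real.exp_eq_exp_ℝ]
  rw [Matrix.exp_add_of_commute _ _ ((Commute.one_left N).smul_left t), hscalar,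
    NormedSpace.exp_eq_cosh_smul_add_sinh_div_smul hk hN, smul_one_mul]

theorem exp_two_by_two (a b c d : ℝ) (h : (a - d)^2 + 4*b*c ≥ 0)
    (hΔ : Real.sqrt ((a - d)^2 + 4*b*c) > 0) :
    NormedSpace.exp (!![a, b; c, d] : Matrix (Fin 2) (Fin 2) ℝ) =
      (Real.sqrt ((a - d)^2 + 4*b*c))⁻¹ •
        !![Real.exp ((a+d)/2) * (Real.sqrt ((a - d)^2 + 4*b*c) * Real.cosh (Real.sqrt ((a - d)^2 + 4*b*c) / 2)
              + (a - d) * Real.sinh (Real.sqrt ((a - d)^2 + 4*b*c) / 2)),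
           Real.exp ((a+d)/2) * (2 * b * Real.sinh (Real.sqrt ((a - d)^2 + 4*b*c) / 2));
           Real.exp ((a+d)/2) * (2 * c * Real.sinh (Real.sqrt ((a - d)^2 + 4*b*c) / 2)),
           Real.exp ((a+d)/2) * (Real.sqrt ((a - d)^2 + 4*b*c) * Real.cosh (Real.sqrt ((a - d)^2 + 4*b*c) / 2)
              + (d - a) * Real.sinh (Real.sqrt ((a - d)^2 + 4*b*c) / 2))] := by
  set Δ := Real.sqrt ((a - d)^2 + 4*b*c)
  have hΔsq : Δ ^ 2 = (a - d)^2 + 4*b*c := Real.sq_sqrt h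
  set N : Matrix (Fin 2) (Fin 2) ℝ := !![(a - d) / 2, b; c, (d - a) / 2] with hN
  have hsplit : !![a, b; c, d] = ((a + d) / 2) • (1 : Matrix (Fin 2) (Fin 2) ℝ) + N := by
    ext i j
    fin_cases i <;> fin_cases j <;> simp [hN] <;> ring
  have hNsq : N * N = (Δ / 2) ^ 2 • (1 : Matrix (Fin 2) (Fin 2) ℝ) := by
    ext i j
    fin_cases i <;> fin_cases j <;> simp [hN, Matrix.mul_apply] <;> nlinarith
  rw [hsplit, Matrix.exp_smul_one_add _ (half_pos hΔ).ne' hNsq]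
  ext i j
  fin_cases i <;> fin_cases j <;> simp [hN] <;> field_simp
end

section
/- Let γ > 2ω > 0, β > 0, and for t ≥ 0 define m(t) = (λ₁e^{−λ₂t} − λ₂e^{−λ₁t})x₀/(λ₁−λ₂) + (e^{−λ₂t} − e^{−λ₁t})v₀/(λ₁−λ₂) and m̄(t) = e^{−λ₂t}x₀, where λ₁ = (γ+sqrt(γ²−4ω²))/2 and λ₂ = (γ−sqrt(γ²−4ω²))/2. Then |m(t) − m̄(t)| ≤ 2(ω|x₀| + |v₀|)/sqrt(γ²−4ω²) for all t ≥ 0. -/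
theorem mean_difference_bound (γ ω β x₀ v₀ : ℝ) (hω : 0 < ω) (hγ : 2*ω < γ) (hβ : 0 < β) :
    let l1 := (γ + Real.sqrt (γ^2 - 4*ω^2))/2
    let l2 := (γ - Real.sqrt (γ^2 - 4*ω^2))/2
    let m : ℝ → ℝ := fun t =>
      (l1*Real.exp (-l2*t) - l2*Real.exp (-l1*t))*x₀/(l1 - l2)
        + (Real.exp (-l2*t) - Real.exp (-l1*t))*v₀/(l1 - l2)
    let mbar : ℝ → ℝ := fun t => Real.exp (-l2*t)*x₀
    ∀ t : ℝ, t ≥ 0 →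
      |m t - mbar t| ≤ 2*(ω*|x₀| + |v₀|)/Real.sqrt (γ^2 - 4*ω^2) := by
  intro l1 l2 m mbar t ht
  set s := Real.sqrt (γ^2 - 4*ω^2) with hs
  have hpos : (0:ℝ) < γ^2 - 4*ω^2 := by nlinarith
  have hs2 : s^2 = γ^2 - 4*ω^2 := Real.sq_sqrt hpos.le
  have hspos : 0 < s := Real.sqrt_pos.mpr hpos
  have hsγ : s < γ := by nlinarith
  have hl2pos : 0 < l2 := by
    show 0 < (γ - s)/2; linarith
  have hl1l2 : l1 - l2 = s := by
    show (γ + s)/2 - (γ - s)/2 = s; ring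
  have hl2ω : l2 ≤ 2*ω := by
    show (γ - s)/2 ≤ 2*ω
    nlinarith [mul_nonneg hspos.le hω.le]
  set E1 := Real.exp (-l1*t) with hE1
  set E2 := Real.exp (-l2*t) with hE2
  have hE1pos : 0 < E1 := Real.exp_pos _
  have hE2le1 : E2 ≤ 1 := by
    rw [hE2, Real.exp_le_one_iff]
    nlinarith
  have hE12 : E1 ≤ E2 := by
    rw [hE1, hE2]
    apply Real.exp_le_exp.mpr
    have : l2 ≤ l1 := by linarith
    nlinarith
  have key : m t - mbar t = (E2 - E1)*(l2*x₀+v₀)/s := by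
    show (l1*E2 - l2*E1)*x₀/(l1 - l2) + (E2 - E1)*v₀/(l1 - l2) - E2*x₀
        = (E2 - E1)*(l2*x₀+v₀)/s
    rw [hl1l2]
    have hl1 : l1 = l2 + s := by linarith
    rw [hl1]
    field_simp
    ring
  rw [key]
  rw [abs_div, abs_of_pos hspos, div_le_div_iff₀ hspos hspos]
  have h1 : |E2 - E1| ≤ 1 := by
    rw [abs_of_nonneg (by linarith)]; linarith
  have h2 : |l2*x₀+v₀| ≤ 2*(ω*|x₀| + |v₀|) := by
    calc |l2*x₀+v₀| ≤ |l2*x₀| + |v₀| := abs_add_le _ _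
    _ = l2*|x₀| + |v₀| := by rw [abs_mul, abs_of_pos hl2pos]
    _ ≤ 2*(ω*|x₀| + |v₀|) := by nlinarith [abs_nonneg x₀, abs_nonneg v₀]
  have h3 : |(E2 - E1)*(l2*x₀+v₀)| ≤ 2*(ω*|x₀| + |v₀|) := by
    calc |(E2 - E1)*(l2*x₀+v₀)| = |E2 - E1| * |l2*x₀+v₀| := abs_mul _ _
    _ ≤ 1 * (2*(ω*|x₀| + |v₀|)) := mul_le_mul h1 h2 (abs_nonneg _) (by norm_num)
    _ = 2*(ω*|x₀| + |v₀|) := by ring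
  exact mul_le_mul_of_nonneg_right h3 hspos.le
end

section
/- Let γ > 2ω > 0 and β > 0. For t ≥ 0 define σ(t) = (γ/β)/(λ₁−λ₂)² · [ (λ₁+λ₂)/(λ₁λ₂) + (4/(λ₁+λ₂))(e^{−(λ₁+λ₂)t} − 1) − e^{−2λ₁t}/λ₁ − e^{−2λ₂t}/λ₂ ] and σ̄(t) = (1/(ω²β))(1 − e^{−2λ₂t}), where λ₁ = (γ+sqrt(γ²−4ω²))/2, λ₂ = (γ−sqrt(γ²−4ω²))/2. Then |σ(t) − σ̄(t)| ≤ 16/(β(γ²−4ω²)) for all t ≥ 0. -/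
set_option maxHeartbeats 1000000


theorem variance_difference_bound (γ ω β : ℝ) (hω : 0 < ω) (hγ : 2*ω < γ) (hβ : 0 < β) :
    let l1 := (γ + Real.sqrt (γ^2 - 4*ω^2))/2
    let l2 := (γ - Real.sqrt (γ^2 - 4*ω^2))/2
    let σ : ℝ → ℝ := fun t =>
      (γ/β)/(l1 - l2)^2 * ((l1 + l2)/(l1*l2) + (4/(l1 + l2))*(Real.exp (-(l1 + l2)*t) - 1)
        - Real.exp (-2*l1*t)/l1 - Real.exp (-2*l2*t)/l2)
    let σbar : ℝ → ℝ := fun t => (1/(ω^2*β))*(1 - Real.exp (-2*l2*t))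
    ∀ t : ℝ, t ≥ 0 → |σ t - σbar t| ≤ 16/(β*(γ^2 - 4*ω^2)) := by
  intro l1 l2 σ σbar t ht
  set s := Real.sqrt (γ^2 - 4*ω^2) with hs
  have harg : (0:ℝ) < γ^2 - 4*ω^2 := by nlinarith
  have hs2 : s^2 = γ^2 - 4*ω^2 := Real.sq_sqrt harg.le
  have hspos : 0 < s := Real.sqrt_pos.mpr harg
  have hsγ : s < γ := by nlinarith [hs2]
  have hl1 : l1 = (γ + s)/2 := rfl
  have hl2 : l2 = (γ - s)/2 := rfl
  have hσ : ∀ u, σ u = (γ/β)/(l1 - l2)^2 * ((l1 + l2)/(l1*l2)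
      + (4/(l1 + l2))*(Real.exp (-(l1 + l2)*u) - 1)
      - Real.exp (-2*l1*u)/l1 - Real.exp (-2*l2*u)/l2) := fun _ => rfl
  have hσbar : ∀ u, σbar u = (1/(ω^2*β))*(1 - Real.exp (-2*l2*u)) := fun _ => rfl
  clear_value l1 l2 σ σbar
  have hl1pos : 0 < l1 := by rw [hl1]; nlinarith
  have hl2pos : 0 < l2 := by rw [hl2]; nlinarith
  have hsum : l1 + l2 = γ := by rw [hl1, hl2]; ring
  have hprod : l1 * l2 = ω^2 := by rw [hl1, hl2]; nlinarith [hs2]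
  have hdiff : (l1 - l2)^2 = s^2 := by rw [hl1, hl2]; ring
  have hl21 : l2 ≤ l1 := by rw [hl1, hl2]; nlinarith
  set E1 := Real.exp (-(l1 + l2)*t) with hE1d
  set E2 := Real.exp (-2*l1*t) with hE2d
  set E3 := Real.exp (-2*l2*t) with hE3d
  have hE1p : 0 < E1 := Real.exp_pos _
  have hE2p : 0 < E2 := Real.exp_pos _
  have hE3p : 0 < E3 := Real.exp_pos _
  have hE1le : E1 ≤ 1 := Real.exp_le_one_iff.mpr (by nlinarith)
  have hE2le : E2 ≤ 1 := Real.exp_le_one_iff.mpr (by nlinarith)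
  have hE3le : E3 ≤ 1 := Real.exp_le_one_iff.mpr (by nlinarith)
  have key : σ t - σbar t
      = (1/(β*(l1 - l2)^2)) * (4*E1 - ((l1+l2)/l1)*E2 + ((l2-3*l1)/l1)*E3) := by
    rw [hσ, hσbar, ← hE1d, ← hE2d, ← hE3d, ← hsum, ← hprod]
    have h1 : l1 ≠ 0 := hl1pos.ne'
    have h2 : l2 ≠ 0 := hl2pos.ne'
    have h3 : l1 + l2 ≠ 0 := by positivity
    have h4 : l1 - l2 ≠ 0 := by
      intro h; rw [sub_eq_zero] at h
      rw [h] at hdiff; simp at hdiff; nlinarith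
    have h5 : β ≠ 0 := hβ.ne'
    field_simp
    ring
  rw [key]
  have hX : |4*E1 - ((l1+l2)/l1)*E2 + ((l2-3*l1)/l1)*E3| ≤ 16 := by
    have hA : (l1+l2)/l1 ≤ 2 := by
      rw [div_le_iff₀ hl1pos]; linarith
    have hA0 : 0 < (l1+l2)/l1 := by positivity
    have hB : -3 ≤ (l2-3*l1)/l1 := by
      rw [le_div_iff₀ hl1pos]; nlinarith
    have hB0 : (l2-3*l1)/l1 ≤ 0 := by
      apply div_nonpos_of_nonpos_of_nonneg <;> nlinarith
    rw [abs_le]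
    constructor
    · nlinarith [mul_le_of_le_one_right hA0.le hE2le, mul_nonneg hA0.le hE2p.le,
        mul_nonpos_of_nonpos_of_nonneg hB0 hE3p.le,
        mul_le_mul_of_nonneg_right hB hE3p.le, mul_le_of_le_one_right hA0.le hE2le]
    · nlinarith [mul_nonneg hA0.le hE2p.le, mul_nonpos_of_nonpos_of_nonneg hB0 hE3p.le]
  have hden : 0 < β*(l1-l2)^2 := by
    apply mul_pos hβ; rw [hdiff]; positivity
  calc |(1/(β*(l1 - l2)^2)) * (4*E1 - ((l1+l2)/l1)*E2 + ((l2-3*l1)/l1)*E3)|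
      = (1/(β*(l1 - l2)^2)) * |4*E1 - ((l1+l2)/l1)*E2 + ((l2-3*l1)/l1)*E3| := by
        rw [abs_mul, abs_of_pos (by positivity)]
    _ ≤ (1/(β*(l1 - l2)^2)) * 16 := by
        apply mul_le_mul_of_nonneg_left hX (by positivity)
    _ = 16/(β*(γ^2 - 4*ω^2)) := by rw [← hs2, ← hdiff]; ring
end

section
/- Let γ > 2ω > 0, β > 0, x₀, v₀ ∈ ℝ, and define m, m̄, σ, σ̄ as the means and variances of the original underdamped oscillator position and the reduced OU process. Then for all t ≥ 0, (m(t) − m̄(t))² + (sqrt(σ(t)) − sqrt(σ̄(t)))² ≤ (4/(γ²−4ω²))·[(ω|x₀| + |v₀|)² + 4/β]. In particular the left-hand side tends to 0 as γ → ∞ uniformly in t. -/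
lemma sqrt_sub_sq_le_abs (a b : ℝ) : (Real.sqrt a - Real.sqrt b)^2 ≤ |a - b| := by
  have key : ∀ x y : ℝ, y ≤ x → (Real.sqrt x - Real.sqrt y)^2 ≤ x - y := by
    intro x y hxy
    rcases le_or_gt 0 y with hy | hy
    · have hx : 0 ≤ x := hy.trans hxy
      have h1 := Real.sq_sqrt hx
      have h2 := Real.sq_sqrt hy
      have h3 : Real.sqrt y ≤ Real.sqrt x := Real.sqrt_le_sqrt hxy
      nlinarith [Real.sqrt_nonneg x, Real.sqrt_nonneg y]
    · rw [Real.sqrt_eq_zero_of_nonpos hy.le]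
      rcases le_or_gt 0 x with hx | hx
      · have h1 := Real.sq_sqrt hx
        nlinarith
      · rw [Real.sqrt_eq_zero_of_nonpos hx.le]
        nlinarith
  rcases le_total b a with h | h
  · rw [abs_of_nonneg (by linarith)]; exact key a b h
  · rw [abs_of_nonpos (by linarith)]
    calc (Real.sqrt a - Real.sqrt b)^2 = (Real.sqrt b - Real.sqrt a)^2 := by ring
    _ ≤ b - a := key b a h
    _ = -(a-b) := by ring

set_option maxHeartbeats 1000000 in
theorem wasserstein_high_friction_bound (γ ω β x₀ v₀ : ℝ)
    (hω : 0 < ω) (hγ : 2*ω < γ) (hβ : 0 < β) :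
    let l1 := (γ + Real.sqrt (γ^2 - 4*ω^2))/2
    let l2 := (γ - Real.sqrt (γ^2 - 4*ω^2))/2
    let m : ℝ → ℝ := fun t =>
      (l1*Real.exp (-l2*t) - l2*Real.exp (-l1*t))*x₀/(l1 - l2)
        + (Real.exp (-l2*t) - Real.exp (-l1*t))*v₀/(l1 - l2)
    let mbar : ℝ → ℝ := fun t => Real.exp (-l2*t)*x₀
    let σ : ℝ → ℝ := fun t =>
      (γ/β)/(l1 - l2)^2 * ((l1 + l2)/(l1*l2) + (4/(l1 + l2))*(Real.exp (-(l1 + l2)*t) - 1)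
        - Real.exp (-2*l1*t)/l1 - Real.exp (-2*l2*t)/l2)
    let σbar : ℝ → ℝ := fun t => (1/(ω^2*β))*(1 - Real.exp (-2*l2*t))
    ∀ t : ℝ, t ≥ 0 →
      (m t - mbar t)^2 + (Real.sqrt (σ t) - Real.sqrt (σbar t))^2 ≤
        (4/(γ^2 - 4*ω^2))*((ω*|x₀| + |v₀|)^2 + 4/β) := by
  intro l1 l2 m mbar σ σbar t ht
  have hγpos : 0 < γ := by linarith
  have hDsq_pos : 0 < γ^2 - 4*ω^2 := by nlinarith
  have hD2 : (Real.sqrt (γ^2 - 4*ω^2))^2 = γ^2 - 4*ω^2 := Real.sq_sqrt hDsq_pos.le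
  have hDpos : 0 < Real.sqrt (γ^2 - 4*ω^2) := Real.sqrt_pos.mpr hDsq_pos
  have hDlt : Real.sqrt (γ^2 - 4*ω^2) < γ := by nlinarith
  have hl2pos : 0 < l2 := by simp only [l2]; linarith
  have hl1pos : 0 < l1 := by simp only [l1]; linarith
  have hdiff : l1 - l2 = Real.sqrt (γ^2 - 4*ω^2) := by simp only [l1, l2]; ring
  have hsum : l1 + l2 = γ := by simp only [l1, l2]; ring
  have hprod : l1 * l2 = ω^2 := by simp only [l1, l2]; nlinarith
  clear_value l1 l2
  have hDne : l1 - l2 ≠ 0 := by rw [hdiff]; exact hDpos.ne'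
  have hD2' : (l1 - l2)^2 = γ^2 - 4*ω^2 := by rw [hdiff]; exact hD2
  have hl2l1 : l2 ≤ l1 := by nlinarith
  have hl2ω : l2 ≤ ω := by nlinarith
  set a := Real.exp (-l1*t) with ha
  set b := Real.exp (-l2*t) with hb
  have ha0 : 0 < a := Real.exp_pos _
  have hb0 : 0 < b := Real.exp_pos _
  have ha1 : a ≤ 1 := by rw [ha]; exact Real.exp_le_one_iff.mpr (by nlinarith)
  have hb1 : b ≤ 1 := by rw [hb]; exact Real.exp_le_one_iff.mpr (by nlinarith)
  have hab : a ≤ b := by rw [ha, hb]; exact Real.exp_le_exp.mpr (by nlinarith)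
  clear_value a b
  -- mean part
  have hm : m t - mbar t = (b - a) * (l2*x₀ + v₀) / (l1 - l2) := by
    simp only [m, mbar]
    rw [ha, hb]
    field_simp
    ring
  have hP : 0 ≤ (ω*|x₀| + |v₀|)^2 := sq_nonneg _
  have hmean : (m t - mbar t)^2 ≤ (ω*|x₀| + |v₀|)^2 / (γ^2 - 4*ω^2) := by
    rw [hm, div_pow, hD2']
    have h1 : |(b - a) * (l2*x₀ + v₀)| ≤ ω*|x₀| + |v₀| := by
      rw [abs_mul]
      have hba : |b - a| ≤ 1 := by rw [abs_of_nonneg (by linarith)]; linarith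
      have h2 : |l2*x₀ + v₀| ≤ ω*|x₀| + |v₀| := by
        calc |l2*x₀ + v₀| ≤ |l2*x₀| + |v₀| := abs_add_le _ _
        _ = l2*|x₀| + |v₀| := by rw [abs_mul, abs_of_pos hl2pos]
        _ ≤ ω*|x₀| + |v₀| := by nlinarith [abs_nonneg x₀]
      calc |b - a| * |l2*x₀ + v₀| ≤ 1 * |l2*x₀ + v₀| :=
            mul_le_mul_of_nonneg_right hba (abs_nonneg _)
      _ = |l2*x₀ + v₀| := one_mul _
      _ ≤ ω*|x₀| + |v₀| := h2
    have key : ((b - a) * (l2*x₀ + v₀))^2 ≤ (ω*|x₀| + |v₀|)^2 := by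
      calc ((b - a) * (l2*x₀ + v₀))^2 = |(b - a) * (l2*x₀ + v₀)|^2 := (sq_abs _).symm
      _ ≤ (ω*|x₀| + |v₀|)^2 := pow_le_pow_left₀ (abs_nonneg _) h1 2
    gcongr
  -- variance part
  have hexp1 : Real.exp (-(l1 + l2)*t) = a * b := by
    rw [show -(l1 + l2)*t = -l1*t + -l2*t by ring, Real.exp_add, ← ha, ← hb]
  have hexp2 : Real.exp (-2*l1*t) = a^2 := by
    rw [show -2*l1*t = -l1*t + -l1*t by ring, Real.exp_add, ← ha]; ring
  have hexp3 : Real.exp (-2*l2*t) = b^2 := by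
    rw [show -2*l2*t = -l2*t + -l2*t by ring, Real.exp_add, ← hb]; ring
  have hγeq : γ = l1 + l2 := hsum.symm
  have hω2 : ω^2 = l1 * l2 := hprod.symm
  have hσ : σ t - σbar t =
      (4*a*b - ((l1+l2)/l1)*a^2 + (l2/l1 - 3)*b^2) / (β*(l1-l2)^2) := by
    simp only [σ, σbar]
    rw [hexp1, hexp2, hexp3, hγeq, hω2, ha, hb]
    have h1 : l1 ≠ 0 := hl1pos.ne'
    have h2 : l2 ≠ 0 := hl2pos.ne'
    have h3 : β ≠ 0 := hβ.ne'
    have h4 : l1 + l2 ≠ 0 := by positivity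
    field_simp
    ring
  rw [hD2'] at hσ
  have hnum : |4*a*b - ((l1+l2)/l1)*a^2 + (l2/l1 - 3)*b^2| ≤ 16 := by
    have hc1 : (l1+l2)/l1 ≤ 2 := by rw [div_le_iff₀ hl1pos]; linarith
    have hc1' : 0 < (l1+l2)/l1 := div_pos (by linarith) hl1pos
    have hc2 : l2/l1 ≤ 1 := (div_le_one hl1pos).mpr hl2l1
    have hc2' : 0 < l2/l1 := div_pos hl2pos hl1pos
    rw [abs_le]
    constructor
    · nlinarith
    · nlinarith
  have hvar : (Real.sqrt (σ t) - Real.sqrt (σbar t))^2 ≤ 16 / (β*(γ^2 - 4*ω^2)) := by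
    calc (Real.sqrt (σ t) - Real.sqrt (σbar t))^2 ≤ |σ t - σbar t| :=
          sqrt_sub_sq_le_abs _ _
    _ = |4*a*b - ((l1+l2)/l1)*a^2 + (l2/l1 - 3)*b^2| / (β*(γ^2 - 4*ω^2)) := by
        rw [hσ, abs_div, abs_of_pos (mul_pos hβ hDsq_pos)]
    _ ≤ 16 / (β*(γ^2 - 4*ω^2)) := by gcongr
  have hre : (4/(γ^2 - 4*ω^2))*((ω*|x₀| + |v₀|)^2 + 4/β)
      = 4*((ω*|x₀| + |v₀|)^2)/(γ^2 - 4*ω^2) + 16/(β*(γ^2 - 4*ω^2)) := by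
    field_simp
    ring
  have hmono : (ω*|x₀| + |v₀|)^2/(γ^2 - 4*ω^2) ≤ 4*((ω*|x₀| + |v₀|)^2)/(γ^2 - 4*ω^2) := by
    gcongr
    linarith
  rw [hre]
  linarith [add_le_add hmean hvar]
end

section
/- Let γ > 2ω > 0, β > 0, x₀, v₀ ∈ ℝ. There exists C > 0 such that for all t ≥ 0, m(t)² + |σ(t) − 1/(βω²)| ≤ C·e^{−2λ₂t}, where m, σ are the mean and variance of the position of the underdamped Brownian oscillator and λ₂ = (γ − sqrt(γ²−4ω²))/2. Hence W₂(N(m(t),σ(t)), N(0, 1/(βω²))) ≤ sqrt(C)·e^{−λ₂t}. -/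
private lemma sqrt_diff_sq_le (a b : ℝ) (hb : 0 ≤ b) :
    (Real.sqrt a - Real.sqrt b)^2 ≤ |a - b| := by
  rcases le_or_gt a 0 with ha | ha
  · have h0 : Real.sqrt a = 0 := Real.sqrt_eq_zero'.mpr ha
    rw [h0]
    have : (0 - Real.sqrt b)^2 = b := by
      rw [zero_sub, neg_sq, Real.sq_sqrt hb]
    rw [this]
    rw [abs_of_nonpos (by linarith)]
    linarith
  · have hua : (Real.sqrt a)^2 = a := Real.sq_sqrt ha.le
    have hvb : (Real.sqrt b)^2 = b := Real.sq_sqrt hb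
    have hu : 0 ≤ Real.sqrt a := Real.sqrt_nonneg a
    have hv : 0 ≤ Real.sqrt b := Real.sqrt_nonneg b
    rcases le_total b a with h | h
    · have huv : Real.sqrt b ≤ Real.sqrt a := Real.sqrt_le_sqrt h
      rw [abs_of_nonneg (by linarith)]
      nlinarith [mul_nonneg hv (sub_nonneg.mpr huv)]
    · have huv : Real.sqrt a ≤ Real.sqrt b := Real.sqrt_le_sqrt h
      rw [abs_of_nonpos (by linarith)]
      nlinarith [mul_nonneg hu (sub_nonneg.mpr huv)]

set_option maxHeartbeats 1600000 in
theorem original_convergence_to_equilibrium (γ ω β x₀ v₀ : ℝ)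
    (hω : 0 < ω) (hγ : 2*ω < γ) (hβ : 0 < β) :
    let l1 := (γ + Real.sqrt (γ^2 - 4*ω^2))/2
    let l2 := (γ - Real.sqrt (γ^2 - 4*ω^2))/2
    let m : ℝ → ℝ := fun t =>
      (l1*Real.exp (-l2*t) - l2*Real.exp (-l1*t))*x₀/(l1 - l2)
        + (Real.exp (-l2*t) - Real.exp (-l1*t))*v₀/(l1 - l2)
    let σ : ℝ → ℝ := fun t =>
      (γ/β)/(l1 - l2)^2 * ((l1 + l2)/(l1*l2) + (4/γ)*(Real.exp (-γ*t) - 1)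
        - Real.exp (-2*l1*t)/l1 - Real.exp (-2*l2*t)/l2)
    ∃ C > 0, ∀ t : ℝ, t ≥ 0 →
      (m t)^2 + |σ t - 1/(β*ω^2)| ≤ C * Real.exp (-2*l2*t) ∧
      Real.sqrt ((m t - 0)^2 + (Real.sqrt (σ t) - Real.sqrt (1/(β*ω^2)))^2) ≤
        Real.sqrt C * Real.exp (-l2*t) := by
  intro l1 l2 m σ
  have hl1v : l1 = (γ + Real.sqrt (γ^2 - 4*ω^2))/2 := rfl
  have hl2v : l2 = (γ - Real.sqrt (γ^2 - 4*ω^2))/2 := rfl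
  have hmdef : ∀ u : ℝ, m u = (l1*Real.exp (-l2*u) - l2*Real.exp (-l1*u))*x₀/(l1 - l2)
        + (Real.exp (-l2*u) - Real.exp (-l1*u))*v₀/(l1 - l2) := fun u => rfl
  have hσdef : ∀ u : ℝ, σ u = (γ/β)/(l1 - l2)^2 * ((l1 + l2)/(l1*l2)
        + (4/γ)*(Real.exp (-γ*u) - 1)
        - Real.exp (-2*l1*u)/l1 - Real.exp (-2*l2*u)/l2) := fun u => rfl
  clear_value l1 l2 m σ
  have hγ0 : (0:ℝ) < γ := by linarith
  have hd : (0:ℝ) < γ^2 - 4*ω^2 := by nlinarith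
  have hs0 : 0 < Real.sqrt (γ^2 - 4*ω^2) := Real.sqrt_pos.mpr hd
  have hs2 : (Real.sqrt (γ^2 - 4*ω^2))^2 = γ^2 - 4*ω^2 := Real.sq_sqrt hd.le
  have hsγ : Real.sqrt (γ^2 - 4*ω^2) < γ := by nlinarith
  have hl1 : 0 < l1 := by rw [hl1v]; linarith
  have hl2 : 0 < l2 := by rw [hl2v]; linarith
  have hsum : l1 + l2 = γ := by rw [hl1v, hl2v]; ring
  have hsub : l1 - l2 = Real.sqrt (γ^2 - 4*ω^2) := by rw [hl1v, hl2v]; ring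
  have hprod : l1 * l2 = ω^2 := by rw [hl1v, hl2v]; nlinarith [hs2]
  have hl12 : l2 < l1 := by
    have := hs0; rw [← hsub] at this; linarith
  set A : ℝ := (γ*|x₀| + 2*|v₀|)/(l1 - l2) with hA
  set K : ℝ := (γ/β)/(l1-l2)^2 * (4/γ + 1/l1 + 1/l2) with hK
  have hsubpos : 0 < l1 - l2 := by linarith
  have hAnn : 0 ≤ A := by
    apply div_nonneg _ hsubpos.le
    positivity
  have hcpos : 0 < (γ/β)/(l1-l2)^2 := div_pos (div_pos hγ0 hβ) (pow_pos hsubpos 2)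
  have hKpos : 0 < K := by
    apply mul_pos hcpos
    have := hl1; have := hl2
    positivity
  have hCpos : 0 < A^2 + K := by positivity
  refine ⟨A^2 + K, hCpos, ?_⟩
  intro t ht
  have hE12 : Real.exp (-l1*t) ≤ Real.exp (-l2*t) := by
    apply Real.exp_le_exp.mpr
    have := mul_le_mul_of_nonneg_right hl12.le ht
    linarith
  have hF12 : Real.exp (-2*l1*t) ≤ Real.exp (-2*l2*t) := by
    apply Real.exp_le_exp.mpr
    have := mul_le_mul_of_nonneg_right hl12.le ht
    linarith
  have hEg : Real.exp (-γ*t) ≤ Real.exp (-2*l2*t) := by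
    apply Real.exp_le_exp.mpr
    have := mul_le_mul_of_nonneg_right (show 2*l2 ≤ γ by linarith) ht
    linarith
  have hE2pos : 0 < Real.exp (-l2*t) := Real.exp_pos _
  have hE1pos : 0 < Real.exp (-l1*t) := Real.exp_pos _
  have hF2pos : 0 < Real.exp (-2*l2*t) := Real.exp_pos _
  have hF1pos : 0 < Real.exp (-2*l1*t) := Real.exp_pos _
  have hEgpos : 0 < Real.exp (-γ*t) := Real.exp_pos _
  -- mean bound
  have hmt : m t = ((l1*Real.exp (-l2*t) - l2*Real.exp (-l1*t))*x₀
      + (Real.exp (-l2*t) - Real.exp (-l1*t))*v₀)/(l1 - l2) := by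
    rw [hmdef]; ring
  have hm : |m t| ≤ A * Real.exp (-l2*t) := by
    have key : |(l1*Real.exp (-l2*t) - l2*Real.exp (-l1*t))*x₀
        + (Real.exp (-l2*t) - Real.exp (-l1*t))*v₀|
        ≤ (γ*|x₀| + 2*|v₀|) * Real.exp (-l2*t) := by
      calc |(l1*Real.exp (-l2*t) - l2*Real.exp (-l1*t))*x₀
        + (Real.exp (-l2*t) - Real.exp (-l1*t))*v₀|
        ≤ |(l1*Real.exp (-l2*t) - l2*Real.exp (-l1*t))*x₀|
          + |(Real.exp (-l2*t) - Real.exp (-l1*t))*v₀| := abs_add_le _ _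
      _ = |l1*Real.exp (-l2*t) - l2*Real.exp (-l1*t)| * |x₀|
          + |Real.exp (-l2*t) - Real.exp (-l1*t)| * |v₀| := by rw [abs_mul, abs_mul]
      _ ≤ (γ*Real.exp (-l2*t))*|x₀| + (2*Real.exp (-l2*t))*|v₀| := by
          gcongr
          · rw [abs_le]
            constructor <;>
              nlinarith [mul_le_mul_of_nonneg_left hE12 hl2.le,
                mul_pos hl2 hE1pos, mul_pos hl1 hE2pos]
          · rw [abs_le]
            constructor <;> nlinarith
        _ = (γ*|x₀| + 2*|v₀|) * Real.exp (-l2*t) := by ring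
    rw [hmt, abs_div, abs_of_pos hsubpos, hA]
    calc |(l1*Real.exp (-l2*t) - l2*Real.exp (-l1*t))*x₀
        + (Real.exp (-l2*t) - Real.exp (-l1*t))*v₀| / (l1 - l2)
        ≤ ((γ*|x₀| + 2*|v₀|) * Real.exp (-l2*t)) / (l1 - l2) := by gcongr
      _ = (γ*|x₀| + 2*|v₀|)/(l1 - l2) * Real.exp (-l2*t) := by ring
  have hm2 : (m t)^2 ≤ A^2 * Real.exp (-2*l2*t) := by
    have h1 : |m t|^2 ≤ (A * Real.exp (-l2*t))^2 :=
      pow_le_pow_left₀ (abs_nonneg _) hm 2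
    rw [sq_abs] at h1
    have h2 : Real.exp (-l2*t)^2 = Real.exp (-2*l2*t) := by
      rw [sq, ← Real.exp_add]; congr 1; ring
    calc (m t)^2 ≤ (A * Real.exp (-l2*t))^2 := h1
      _ = A^2 * Real.exp (-l2*t)^2 := by ring
      _ = A^2 * Real.exp (-2*l2*t) := by rw [h2]
  -- variance
  have hβ' := hβ.ne'
  have hγ' := hγ0.ne'
  have hω' := hω.ne'
  have hd' := hd.ne'
  have hσc : (γ/β)/(l1-l2)^2 * ((l1+l2)/(l1*l2) - 4/γ) = 1/(β*ω^2) := by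
    rw [hsum, hprod, hsub, hs2]
    field_simp
  have hσd : σ t - 1/(β*ω^2) = (γ/β)/(l1-l2)^2 *
      ((4/γ)*Real.exp (-γ*t) - Real.exp (-2*l1*t)/l1 - Real.exp (-2*l2*t)/l2) := by
    have h0 : σ t = (γ/β)/(l1-l2)^2 * (((l1+l2)/(l1*l2) - 4/γ)
        + ((4/γ)*Real.exp (-γ*t) - Real.exp (-2*l1*t)/l1 - Real.exp (-2*l2*t)/l2)) := by
      rw [hσdef]; ring
    rw [h0, mul_add, hσc]
    ring
  have hσb : |σ t - 1/(β*ω^2)| ≤ K * Real.exp (-2*l2*t) := by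
    have hX : |(4/γ)*Real.exp (-γ*t) - Real.exp (-2*l1*t)/l1 - Real.exp (-2*l2*t)/l2|
        ≤ (4/γ + 1/l1 + 1/l2) * Real.exp (-2*l2*t) := by
      rw [abs_le]
      have h4γ : (0:ℝ) ≤ 4/γ := by positivity
      have hh1 : (4/γ)*Real.exp (-γ*t) ≤ (4/γ)*Real.exp (-2*l2*t) :=
        mul_le_mul_of_nonneg_left hEg h4γ
      have hh2 : Real.exp (-2*l1*t)/l1 ≤ Real.exp (-2*l2*t)/l1 := by gcongr
      have hh3 : 0 ≤ Real.exp (-2*l1*t)/l1 := by positivity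
      have hh4 : 0 ≤ Real.exp (-2*l2*t)/l2 := by positivity
      have hh5 : 0 ≤ Real.exp (-2*l2*t)/l1 := by positivity
      have hh6 : 0 ≤ (4/γ)*Real.exp (-γ*t) := by positivity
      have hexp : (4/γ + 1/l1 + 1/l2) * Real.exp (-2*l2*t)
          = (4/γ)*Real.exp (-2*l2*t) + Real.exp (-2*l2*t)/l1 + Real.exp (-2*l2*t)/l2 := by
        field_simp
      rw [hexp]
      constructor
      · linarith
      · nlinarith
    calc |σ t - 1/(β*ω^2)|
        = (γ/β)/(l1-l2)^2 * |(4/γ)*Real.exp (-γ*t) - Real.exp (-2*l1*t)/l1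
            - Real.exp (-2*l2*t)/l2| := by
          rw [hσd, abs_mul, abs_of_pos hcpos]
      _ ≤ (γ/β)/(l1-l2)^2 * ((4/γ + 1/l1 + 1/l2) * Real.exp (-2*l2*t)) :=
          mul_le_mul_of_nonneg_left hX hcpos.le
      _ = K * Real.exp (-2*l2*t) := by rw [hK]; ring
  constructor
  · nlinarith [hm2, hσb]
  · have hD : (Real.sqrt (σ t) - Real.sqrt (1/(β*ω^2)))^2 ≤ |σ t - 1/(β*ω^2)| :=
      sqrt_diff_sq_le _ _ (by positivity)
    have hsum2 : (m t - 0)^2 + (Real.sqrt (σ t) - Real.sqrt (1/(β*ω^2)))^2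
        ≤ (A^2 + K) * Real.exp (-2*l2*t) := by
      rw [sub_zero]
      nlinarith [hm2, hσb]
    calc Real.sqrt ((m t - 0)^2 + (Real.sqrt (σ t) - Real.sqrt (1/(β*ω^2)))^2)
        ≤ Real.sqrt ((A^2 + K) * Real.exp (-2*l2*t)) := Real.sqrt_le_sqrt hsum2
      _ = Real.sqrt (A^2 + K) * Real.exp (-l2*t) := by
          rw [Real.sqrt_mul hCpos.le]
          congr 1
          rw [show (-2*l2*t) = (-l2*t) + (-l2*t) by ring, Real.exp_add, ← sq,
            Real.sqrt_sq hE2pos.le]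
end

section
/- Let a < 0, k > 0, x₁, x₂ ∈ ℝ. Define μ₁(t) = (1/2)·((e^{(a−2k)t}+e^{at})x₁ + (e^{at}−e^{(a−2k)t})x₂) and μ̂₁(t) = e^{at}x₁. Then for all t ≥ 0, |μ₁(t) − μ̂₁(t)| = (1/2)e^{at}|x₂−x₁|(1 − e^{−2kt}) ≤ k·|x₂−x₁|/(|a|·e). -/
theorem coupled_mean_difference (a k x₁ x₂ : ℝ) (ha : a < 0) (hk : k > 0) :
    let μ₁ : ℝ → ℝ := fun t =>
      (1/2)*((Real.exp ((a - 2*k)*t) + Real.exp (a*t))*x₁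
        + (Real.exp (a*t) - Real.exp ((a - 2*k)*t))*x₂)
    let μhat : ℝ → ℝ := fun t => Real.exp (a*t)*x₁
    ∀ t : ℝ, t ≥ 0 →
      |μ₁ t - μhat t| = (1/2)*Real.exp (a*t)*(abs (x₂ - x₁))*(1 - Real.exp (-2*k*t)) ∧
      |μ₁ t - μhat t| ≤ k*(abs (x₂ - x₁))/((abs a)*Real.exp 1) := by
  intro μ₁ μhat t ht
  have hE : Real.exp ((a - 2*k)*t) = Real.exp (a*t) * Real.exp (-2*k*t) := by
    rw [← Real.exp_add]; ring_nf
  have hE1pos : 0 < Real.exp (a*t) := Real.exp_pos _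
  have hE2le : Real.exp (-2*k*t) ≤ 1 := by
    apply Real.exp_le_one_iff.mpr
    nlinarith
  have hdiff : μ₁ t - μhat t = (1/2)*(Real.exp (a*t)*(1 - Real.exp (-2*k*t)))*(x₂ - x₁) := by
    simp only [μ₁, μhat, hE]; ring
  have heq : |μ₁ t - μhat t|
      = (1/2)*Real.exp (a*t)*(abs (x₂ - x₁))*(1 - Real.exp (-2*k*t)) := by
    rw [hdiff, abs_mul, abs_mul]
    rw [abs_of_nonneg (by norm_num : (0:ℝ) ≤ (1/2:ℝ)),
      abs_of_nonneg (by nlinarith : (0:ℝ) ≤ Real.exp (a*t)*(1 - Real.exp (-2*k*t)))]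
    ring
  refine ⟨heq, ?_⟩
  rw [heq, abs_of_neg ha]
  -- key : 1 - exp(-2kt) ≤ 2kt
  have h1 : 1 - Real.exp (-2*k*t) ≤ 2*k*t := by
    have := Real.add_one_le_exp (-2*k*t)
    linarith
  -- key : (-a)*t*exp(a*t)*exp(1) ≤ 1
  have h2 : (-a)*t*Real.exp (a*t)*Real.exp 1 ≤ 1 := by
    have hu : (-a)*t ≤ Real.exp ((-a)*t - 1) := by
      have := Real.add_one_le_exp ((-a)*t - 1)
      linarith
    have hmul : (-a)*t * Real.exp (a*t) ≤ Real.exp ((-a)*t - 1) * Real.exp (a*t) :=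
      mul_le_mul_of_nonneg_right hu hE1pos.le
    have hred : Real.exp ((-a)*t - 1) * Real.exp (a*t) = Real.exp (-1) := by
      rw [← Real.exp_add]; ring_nf
    have hinv : Real.exp (-1) * Real.exp 1 = 1 := by
      rw [← Real.exp_add]; norm_num
    have hepos : (0:ℝ) < Real.exp 1 := Real.exp_pos _
    calc (-a)*t*Real.exp (a*t)*Real.exp 1
        ≤ Real.exp (-1) * Real.exp 1 := by
          apply mul_le_mul_of_nonneg_right _ hepos.le
          linarith [hmul, hred]
      _ = 1 := hinv
  have hden : 0 < (-a) * Real.exp 1 := mul_pos (by linarith) (Real.exp_pos 1)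
  rw [le_div_iff₀ hden]
  have habsnn : (0:ℝ) ≤ |x₂ - x₁| := abs_nonneg _
  nlinarith [mul_nonneg habsnn hE1pos.le, mul_nonneg (mul_nonneg habsnn hE1pos.le) (Real.exp_pos 1).le, mul_le_mul_of_nonneg_left h2 (mul_nonneg habsnn hk.le), mul_le_mul_of_nonneg_left h1 (mul_nonneg habsnn hE1pos.le)]
end

section
/- Let a < 0, k > 0. Define Σ₁₁(t) = (1/2)·((e^{2(a−2k)t}−1)/(a−2k) + (e^{2at}−1)/a) and Σ̂₁(t) = Σ̄·(1 − e^{2at}) where Σ̄ = −(1/2)·(1/(a−2k) + 1/a). Then for all t ≥ 0, |Σ₁₁(t) − Σ̂₁(t)| = (1/2)·(1/(2k−a))·e^{2at}·(1 − e^{−4kt}) ≤ k/(a²·e). -/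
theorem coupled_variance_difference (a k : ℝ) (ha : a < 0) (hk : k > 0) :
    let S11 : ℝ → ℝ := fun t =>
      (1/2)*((Real.exp (2*(a - 2*k)*t) - 1)/(a - 2*k) + (Real.exp (2*a*t) - 1)/a)
    let Sbar : ℝ := -(1/2)*(1/(a - 2*k) + 1/a)
    let Shat : ℝ → ℝ := fun t => Sbar*(1 - Real.exp (2*a*t))
    ∀ t : ℝ, t ≥ 0 →
      |S11 t - Shat t| = (1/2)*(1/(2*k - a))*Real.exp (2*a*t)*(1 - Real.exp (-4*k*t)) ∧
      |S11 t - Shat t| ≤ k/(a^2*Real.exp 1) := by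
  intro S11 Sbar Shat t ht
  have ha' : a ≠ 0 := ne_of_lt ha
  have h2 : a - 2*k ≠ 0 := by nlinarith
  have h3 : (0:ℝ) < 2*k - a := by linarith
  have hEpos := Real.exp_pos (2*a*t)
  have hFpos := Real.exp_pos (-4*k*t)
  have he := Real.exp_pos 1
  have hFle : Real.exp (-4*k*t) ≤ 1 := Real.exp_le_one_iff.mpr (by nlinarith)
  have hE : Real.exp (2*(a - 2*k)*t) = Real.exp (2*a*t) * Real.exp (-4*k*t) := by
    rw [← Real.exp_add]; ring_nf
  have key : S11 t - Shat t
      = (1/2)*(1/(2*k - a))*Real.exp (2*a*t)*(1 - Real.exp (-4*k*t)) := by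
    simp only [S11, Shat, Sbar]
    rw [hE]
    field_simp
    ring
  have habs : |S11 t - Shat t|
      = (1/2)*(1/(2*k - a))*Real.exp (2*a*t)*(1 - Real.exp (-4*k*t)) := by
    rw [key]
    apply abs_of_nonneg
    have h1 : (0:ℝ) ≤ 1 - Real.exp (-4*k*t) := by linarith
    have h2' : (0:ℝ) < (1/2)*(1/(2*k - a))*Real.exp (2*a*t) := by positivity
    exact mul_nonneg h2'.le h1
  refine ⟨habs, ?_⟩
  rw [habs]
  have hFle2 : 1 - Real.exp (-4*k*t) ≤ 4*k*t := by
    have := Real.add_one_le_exp (-4*k*t)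
    linarith
  have htE : t * Real.exp (2*a*t) ≤ 1/((-2*a)*Real.exp 1) := by
    have h4 := Real.add_one_le_exp (-(2*a*t) - 1)
    have h5 : Real.exp (-(2*a*t) - 1) = 1/(Real.exp (2*a*t)*Real.exp 1) := by
      rw [Real.exp_sub, Real.exp_neg]
      field_simp
    rw [h5] at h4
    rw [le_div_iff₀ (by nlinarith : (0:ℝ) < (-2*a)*Real.exp 1)]
    have h6 : (-(2*a*t) - 1) + 1 = -2*a*t := by ring
    rw [h6] at h4
    have h7 := (le_div_iff₀ (by positivity : (0:ℝ) < Real.exp (2*a*t)*Real.exp 1)).mp h4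
    nlinarith
  have hc : (0:ℝ) < (1/2)*(1/(2*k-a))*Real.exp (2*a*t) := by positivity
  calc (1/2)*(1/(2*k - a))*Real.exp (2*a*t)*(1 - Real.exp (-4*k*t))
      ≤ (1/2)*(1/(2*k - a))*Real.exp (2*a*t)*(4*k*t) :=
        mul_le_mul_of_nonneg_left hFle2 hc.le
    _ = (2*k/(2*k - a))*(t*Real.exp (2*a*t)) := by ring
    _ ≤ (2*k/(-a))*(t*Real.exp (2*a*t)) := by
        have hnn : 0 ≤ t*Real.exp (2*a*t) := mul_nonneg ht hEpos.le
        have hd : 2*k/(2*k - a) ≤ 2*k/(-a) := by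
          apply div_le_div_of_nonneg_left (by linarith) (by linarith) (by linarith)
        exact mul_le_mul_of_nonneg_right hd hnn
    _ ≤ (2*k/(-a))*(1/((-2*a)*Real.exp 1)) := by
        apply mul_le_mul_of_nonneg_left htE
        have hna : (0:ℝ) < -a := by linarith
        positivity
    _ = k/(a^2*Real.exp 1) := by
        field_simp
end

section
/- Let a < 0, k > 0, x₁, x₂ ∈ ℝ. With μ₁, μ̂₁, Σ₁₁, Σ̂₁ as in the coupled identical-oscillator model and its reduction, there exists C > 0 (depending on a, x₁, x₂ but not on t or k, for k in a bounded set) such that for all t ≥ 0, (μ₁(t) − μ̂₁(t))² + (sqrt(Σ₁₁(t)) − sqrt(Σ̂₁(t)))² ≤ C·k. -/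
/-!
The mean gap is `(e^{(a-2k)t} - e^{at})(x₁ - x₂)/2` and the variance gap is
`(e^{2at} - e^{2(a-2k)t}) / (2(2k - a))`. Both exponential differences are `O(k)` uniformly
in `t ≥ 0`: `e^{ct}(1 - e^{-dt}) ≤ d · t e^{ct} ≤ d / |c|` for `c < 0`. For the standard
deviations, `(√x - √y)² ≤ x - y` when `0 ≤ y ≤ x`.
-/

open Real

lemma mul_exp_mul_le_one_div_neg {c t : ℝ} (hc : c < 0) : t * exp (c * t) ≤ 1 / -c := by
  rw [le_div_iff₀ (neg_pos.2 hc)]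
  have h := mul_exp_neg_le_exp_neg_one (-c * t)
  rw [neg_mul, neg_neg] at h
  nlinarith [exp_lt_one_iff.2 (neg_one_lt_zero (R := ℝ))]

lemma exp_mul_sub_exp_sub_mul_nonneg {c d t : ℝ} (hd : 0 ≤ d) (ht : 0 ≤ t) :
    0 ≤ exp (c * t) - exp ((c - d) * t) :=
  sub_nonneg.2 (exp_le_exp.2 (by nlinarith [mul_nonneg hd ht]))

lemma exp_mul_sub_exp_sub_mul_le {c d : ℝ} (t : ℝ) (hc : c < 0) (hd : 0 ≤ d) :
    exp (c * t) - exp ((c - d) * t) ≤ d / -c := by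
  have hfactor : exp (c * t) - exp ((c - d) * t) = exp (c * t) * (1 - exp (-(d * t))) := by
    rw [mul_sub, ← exp_add]; ring_nf
  have hlin : 1 - exp (-(d * t)) ≤ d * t := by linarith [add_one_le_exp (-(d * t))]
  calc exp (c * t) - exp ((c - d) * t)
      ≤ exp (c * t) * (d * t) := hfactor ▸ mul_le_mul_of_nonneg_left hlin (exp_pos _).le
    _ = d * (t * exp (c * t)) := by ring
    _ ≤ d * (1 / -c) := mul_le_mul_of_nonneg_left (mul_exp_mul_le_one_div_neg hc) hd
    _ = d / -c := mul_one_div d (-c)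

lemma sq_sqrt_sub_sqrt_le {x y : ℝ} (hy : 0 ≤ y) (hyx : y ≤ x) : (√x - √y) ^ 2 ≤ x - y := by
  have hsq : (√x - √y) ^ 2 = x - y - 2 * √y * (√x - √y) := by
    linear_combination sq_sqrt (hy.trans hyx) - sq_sqrt hy
  rw [hsq]
  have := mul_nonneg (sqrt_nonneg y) (sub_nonneg.2 (sqrt_le_sqrt hyx))
  linarith

section CoupledOscillators

variable {a k t : ℝ}

lemma mean_gap_sq_le (x₁ x₂ : ℝ) (ha : a < 0) (hk : 0 ≤ k) (ht : 0 ≤ t) :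
    ((1/2) * ((exp ((a - 2*k)*t) + exp (a*t))*x₁ + (exp (a*t) - exp ((a - 2*k)*t))*x₂)
      - exp (a*t)*x₁) ^ 2 ≤ (x₁ - x₂) ^ 2 / a ^ 2 * k ^ 2 := by
  have hgap := exp_mul_sub_exp_sub_mul_le (d := 2*k) t ha (by linarith)
  have hgap_sq : (exp (a*t) - exp ((a - 2*k)*t)) ^ 2 ≤ (2*k / -a) ^ 2 :=
    pow_le_pow_left₀ (exp_mul_sub_exp_sub_mul_nonneg (by linarith) ht) hgap 2
  calc _ = (exp (a*t) - exp ((a - 2*k)*t)) ^ 2 * (x₁ - x₂) ^ 2 / 4 := by ring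
    _ ≤ (2*k / -a) ^ 2 * (x₁ - x₂) ^ 2 / 4 := by gcongr
    _ = (x₁ - x₂) ^ 2 / a ^ 2 * k ^ 2 := by field_simp; ring

lemma variance_gap_eq (ha : a < 0) (hk : 0 ≤ k) :
    (1/2)*((exp (2*(a - 2*k)*t) - 1)/(a - 2*k) + (exp (2*a*t) - 1)/a)
      - -(1/2)*(1/(a - 2*k) + 1/a)*(1 - exp (2*a*t))
      = (exp (2*a*t) - exp ((2*a - 4*k)*t)) / (2*(2*k - a)) := by
  have hb : a - 2*k ≠ 0 := by linarith
  have hb' : 2*k - a ≠ 0 := by linarith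
  rw [show (2*a - 4*k)*t = 2*(a - 2*k)*t by ring]
  field_simp
  ring

lemma variance_gap_nonneg (ha : a < 0) (hk : 0 ≤ k) (ht : 0 ≤ t) :
    0 ≤ (exp (2*a*t) - exp ((2*a - 4*k)*t)) / (2*(2*k - a)) :=
  div_nonneg (exp_mul_sub_exp_sub_mul_nonneg (by linarith) ht) (by linarith)

lemma variance_gap_le (ha : a < 0) (hk : 0 ≤ k) :
    (exp (2*a*t) - exp ((2*a - 4*k)*t)) / (2*(2*k - a)) ≤ 1 / a ^ 2 * k := by
  have hgap := exp_mul_sub_exp_sub_mul_le (d := 4*k) t (by linarith : 2*a < 0) (by linarith)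
  rw [div_le_iff₀ (by linarith)]
  calc _ ≤ 4*k / -(2*a) := hgap
    _ = 1 / a ^ 2 * k * (2 * -a) := by field_simp; ring
    _ ≤ 1 / a ^ 2 * k * (2*(2*k - a)) := by gcongr; linarith

lemma reduced_variance_nonneg (ha : a < 0) (hk : 0 ≤ k) (ht : 0 ≤ t) :
    0 ≤ -(1/2)*(1/(a - 2*k) + 1/a)*(1 - exp (2*a*t)) := by
  have hsum : 1/(a - 2*k) + 1/a < 0 :=
    add_neg (one_div_neg.2 (by linarith)) (one_div_neg.2 ha)
  have hexp : exp (2*a*t) ≤ 1 := exp_le_one_iff.2 (by nlinarith)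
  nlinarith

lemma std_gap_sq_le (ha : a < 0) (hk : 0 ≤ k) (ht : 0 ≤ t) :
    (√((1/2)*((exp (2*(a - 2*k)*t) - 1)/(a - 2*k) + (exp (2*a*t) - 1)/a))
      - √(-(1/2)*(1/(a - 2*k) + 1/a)*(1 - exp (2*a*t)))) ^ 2 ≤ 1 / a ^ 2 * k := by
  have hgap := variance_gap_eq (t := t) ha hk
  refine (sq_sqrt_sub_sqrt_le (reduced_variance_nonneg ha hk ht) ?_).trans ?_
  · linarith [variance_gap_nonneg ha hk ht]
  · rw [hgap]; exact variance_gap_le ha hk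

end CoupledOscillators

theorem coupled_wasserstein_small_coupling (a x₁ x₂ K : ℝ) (ha : a < 0) (hK : K > 0) :
    ∃ C > 0, ∀ k : ℝ, 0 < k → k ≤ K →
      let μ₁ : ℝ → ℝ := fun t =>
        (1/2)*((Real.exp ((a - 2*k)*t) + Real.exp (a*t))*x₁
          + (Real.exp (a*t) - Real.exp ((a - 2*k)*t))*x₂)
      let μhat : ℝ → ℝ := fun t => Real.exp (a*t)*x₁
      let S11 : ℝ → ℝ := fun t =>
        (1/2)*((Real.exp (2*(a - 2*k)*t) - 1)/(a - 2*k) + (Real.exp (2*a*t) - 1)/a)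
      let Shat : ℝ → ℝ := fun t => -(1/2)*(1/(a - 2*k) + 1/a)*(1 - Real.exp (2*a*t))
      ∀ t : ℝ, t ≥ 0 →
        (μ₁ t - μhat t)^2 + (Real.sqrt (S11 t) - Real.sqrt (Shat t))^2 ≤ C*k := by
  have hC : 0 < (x₁ - x₂) ^ 2 / a ^ 2 * K + 1 / a ^ 2 :=
    add_pos_of_nonneg_of_pos (by positivity) (one_div_pos.2 (sq_pos_of_neg ha))
  refine ⟨_, hC, fun k hk hkK t ht => ?_⟩
  have hmean := mean_gap_sq_le x₁ x₂ ha hk.le ht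
  have hstd := std_gap_sq_le ha hk.le ht
  have hk2 : (x₁ - x₂) ^ 2 / a ^ 2 * k ^ 2 ≤ (x₁ - x₂) ^ 2 / a ^ 2 * K * k := by
    rw [mul_assoc]; gcongr; nlinarith
  simp only
  linarith
end

section
/- Let a < 0, k > 0, x₁, x₂ ∈ ℝ. With μ₁, μ̂₁, Σ₁₁, Σ̂₁ as in the coupled identical-oscillator model and its reduction, there exists C > 0 such that for all t ≥ 0, (μ₁(t) − μ̂₁(t))² + |Σ₁₁(t) − Σ̂₁(t)| ≤ C·e^{2at}; hence the Wasserstein distance between the original and reduced laws is at most sqrt(C)·e^{at}. -/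
/-!
With `E = e^{(a-2k)t} ≤ F = e^{at}`, the mean gap is `(E - F)(x₁ - x₂)/2` and the variance gap
is `(F² - E²)/(2(2k - a))`; since `0 < E ≤ F`, both are `O(F²) = O(e^{2at})`. The Wasserstein
bound then follows from `(√u - √v)² ≤ |u - v|`.
-/

open Real

lemma exp_two_mul_mul (c t : ℝ) : exp (2 * c * t) = exp (c * t) ^ 2 := by
  rw [← exp_nat_mul]; ring_nf

lemma sq_sqrt_sub_sqrt_le_of_le {u v : ℝ} (h : v ≤ u) : (√u - √v) ^ 2 ≤ u - v := by
  have hsqrt : √v ≤ √u := sqrt_le_sqrt h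
  have hmax : max u 0 - max v 0 ≤ u - v := by
    simp only [max_def]
    split_ifs <;> linarith
  calc (√u - √v) ^ 2 ≤ (√u - √v) * (√u + √v) := by
        nlinarith [sqrt_nonneg v]
    _ = √u ^ 2 - √v ^ 2 := by ring
    _ = max u 0 - max v 0 := by rw [sq_sqrt', sq_sqrt']
    _ ≤ u - v := hmax

/-- No sign conditions are needed: `√` sends negative numbers to `0`. -/
lemma sq_sqrt_sub_sqrt_le_abs_sub (u v : ℝ) : (√u - √v) ^ 2 ≤ |u - v| := by
  rcases le_total v u with h | h
  · exact (sq_sqrt_sub_sqrt_le_of_le h).trans (le_abs_self _)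
  · rw [abs_sub_comm, ← neg_sub, neg_sq]
    exact (sq_sqrt_sub_sqrt_le_of_le h).trans (le_abs_self _)

/-- `√(m² + (√u - √v)²)` is the 2-Wasserstein distance between `𝒩(m₁, u)` and `𝒩(m₂, v)`
with `m = m₁ - m₂`. -/
lemma sqrt_sq_add_sq_sqrt_sub_sqrt_le {m u v C M : ℝ} (hM : 0 ≤ M)
    (h : m ^ 2 + |u - v| ≤ C * M ^ 2) : √(m ^ 2 + (√u - √v) ^ 2) ≤ √C * M := by
  calc √(m ^ 2 + (√u - √v) ^ 2) ≤ √(C * M ^ 2) :=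
        sqrt_le_sqrt (by linarith [sq_sqrt_sub_sqrt_le_abs_sub u v])
    _ = √C * M := by rw [sqrt_mul' C (sq_nonneg M), sqrt_sq hM]

lemma sq_coupled_mean_sub_le {b c t : ℝ} (hbc : b ≤ c) (ht : 0 ≤ t) (x₁ x₂ : ℝ) :
    ((1/2) * ((exp (b * t) + exp (c * t)) * x₁ + (exp (c * t) - exp (b * t)) * x₂)
        - exp (c * t) * x₁) ^ 2 ≤ (x₁ - x₂) ^ 2 / 4 * exp (2 * c * t) := by
  have hE := exp_pos (b * t)
  have hEF : exp (b * t) ≤ exp (c * t) := exp_le_exp.mpr (by nlinarith)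
  calc _ = (exp (c * t) - exp (b * t)) ^ 2 * ((x₁ - x₂) ^ 2 / 4) := by ring
    _ ≤ exp (c * t) ^ 2 * ((x₁ - x₂) ^ 2 / 4) := by
        gcongr
        linarith
    _ = _ := by rw [exp_two_mul_mul]; ring

lemma coupled_variance_sub_eq {a b : ℝ} (ha : a ≠ 0) (hb : b ≠ 0) (t : ℝ) :
    (1/2) * ((exp (2 * b * t) - 1) / b + (exp (2 * a * t) - 1) / a)
        - -(1/2) * (1 / b + 1 / a) * (1 - exp (2 * a * t))
      = (exp (2 * a * t) - exp (2 * b * t)) / (-2 * b) := by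
  field_simp
  ring

lemma abs_coupled_variance_sub_le {a b t : ℝ} (ha : a ≠ 0) (hb : b < 0) (hba : b ≤ a)
    (ht : 0 ≤ t) :
    |(1/2) * ((exp (2 * b * t) - 1) / b + (exp (2 * a * t) - 1) / a)
        - -(1/2) * (1 / b + 1 / a) * (1 - exp (2 * a * t))|
      ≤ 1 / (-2 * b) * exp (2 * a * t) := by
  have hEF : exp (2 * b * t) ≤ exp (2 * a * t) := exp_le_exp.mpr (by nlinarith)
  have hgap : |exp (2 * a * t) - exp (2 * b * t)| ≤ exp (2 * a * t) :=
    abs_sub_le_of_nonneg_of_le (exp_pos _).le le_rfl (exp_pos _).le hEF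
  rw [coupled_variance_sub_eq ha hb.ne, abs_div, abs_of_pos (by linarith : 0 < -2 * b),
    one_div_mul_eq_div]
  exact div_le_div_of_nonneg_right hgap (by linarith)

theorem coupled_wasserstein_longtime (a k x₁ x₂ : ℝ) (ha : a < 0) (hk : k > 0) :
    let μ₁ : ℝ → ℝ := fun t =>
      (1/2)*((Real.exp ((a - 2*k)*t) + Real.exp (a*t))*x₁
        + (Real.exp (a*t) - Real.exp ((a - 2*k)*t))*x₂)
    let μhat : ℝ → ℝ := fun t => Real.exp (a*t)*x₁
    let S11 : ℝ → ℝ := fun t =>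
      (1/2)*((Real.exp (2*(a - 2*k)*t) - 1)/(a - 2*k) + (Real.exp (2*a*t) - 1)/a)
    let Shat : ℝ → ℝ := fun t => -(1/2)*(1/(a - 2*k) + 1/a)*(1 - Real.exp (2*a*t))
    ∃ C > 0, ∀ t : ℝ, t ≥ 0 →
      (μ₁ t - μhat t)^2 + |S11 t - Shat t| ≤ C*Real.exp (2*a*t) ∧
      Real.sqrt ((μ₁ t - μhat t)^2 + (Real.sqrt (S11 t) - Real.sqrt (Shat t))^2) ≤
        Real.sqrt C * Real.exp (a*t) := by
  intro μ₁ μhat S11 Shat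
  have hb : a - 2 * k < 0 := by linarith
  have hba : a - 2 * k ≤ a := by linarith
  have hrate : 0 < 1 / (-2 * (a - 2 * k)) := one_div_pos.mpr (by linarith)
  refine ⟨(x₁ - x₂) ^ 2 / 4 + 1 / (-2 * (a - 2 * k)), by positivity, fun t ht => ?_⟩
  have hbound : (μ₁ t - μhat t) ^ 2 + |S11 t - Shat t|
      ≤ ((x₁ - x₂) ^ 2 / 4 + 1 / (-2 * (a - 2 * k))) * exp (2 * a * t) := by
    rw [add_mul]
    exact add_le_add (sq_coupled_mean_sub_le hba ht x₁ x₂)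
      (abs_coupled_variance_sub_le ha.ne hb hba ht)
  refine ⟨hbound, sqrt_sq_add_sq_sqrt_sub_sqrt_le (exp_pos _).le ?_⟩
  rwa [← exp_two_mul_mul]
end
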